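/- Let A be a hereditary differential operator on V and F ∈ V a function for which A is a recursion operator (i.e. X_F(A) = [D_F, A]). Then the functions A^n(F), n ≥ 0, pairwise commute: {A^n(F), A^m(F)} = 0 for all n, m ≥ 0. -/

import Mathlib

/-- An algebra of differential functions in one variable `u`:
a commutative `ℂ`-algebra with partial derivatives `∂/∂u⁽ⁿ⁾`, a derivation `∂/∂x`,
distinguished elements `u⁽ⁿ⁾`, and the total derivative `∂`. -/
structure DiffAlg (V : Type) [CommRing V] [Algebra ℂ V] where
  pd : ℕ → Derivation ℂ V V
  dx : Derivation ℂ V V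
  u : ℕ → V
  total : Derivation ℂ V V
  pd_comm : ∀ m n f, pd m (pd n f) = pd n (pd m f)
  pd_dx : ∀ n f, pd n (dx f) = dx (pd n f)
  pd_u : ∀ m n, pd m (u n) = if m = n then 1 else 0
  dx_u : ∀ n, dx (u n) = 0
  pdFin : ∀ f, Set.Finite {n | pd n f ≠ 0}
  total_eq : ∀ f, total f = (∑ᶠ n, u (n + 1) * pd n f) + dx f

namespace DiffAlg

variable {V : Type} [CommRing V] [Algebra ℂ V]

/-- The evolutionary vector field `X_F` applied to `f`. -/
noncomputable def evf (A : DiffAlg V) (F f : V) : V :=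
  ∑ᶠ n, (fun x => A.total x)^[n] F * A.pd n f

end DiffAlg

/-- Generalized binomial coefficient `C(k, n)` for `k : ℤ`. -/
def intChoose (k : ℤ) (n : ℕ) : ℤ :=
  (∏ i ∈ Finset.range n, (k - (i : ℤ))) / (n.factorial : ℤ)

namespace DiffAlg

variable {V : Type} [CommRing V] [Algebra ℂ V]

/-- Product of two pseudodifferential operators given by their coefficient functions
(`a m` is the coefficient of `∂^m`), using `∂^k ∘ a = Σ_n C(k,n) a⁽ⁿ⁾ ∂^{k-n}`. -/
noncomputable def mulZ (A : DiffAlg V) (a b : ℤ → V) : ℤ → V := fun m =>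
  ∑ᶠ (k : ℤ), ∑ᶠ (n : ℕ), intChoose k n • (a k * (fun x => A.total x)^[n] (b (m - k + n)))

/-- The Fréchet derivative `D_F` as a pseudodifferential operator. -/
noncomputable def DFz (A : DiffAlg V) (F : V) : ℤ → V := fun m =>
  if 0 ≤ m then A.pd m.toNat F else 0

/-- The Lie derivative `𝓛_F(L) = X_F(L) - [D_F, L]` of a pseudodifferential operator. -/
noncomputable def lieD (A : DiffAlg V) (F : V) (L : ℤ → V) : ℤ → V := fun m =>
  evf A F (L m) - (mulZ A (DFz A F) L m - mulZ A L (DFz A F) m)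

/-- The identity pseudodifferential operator. -/
def onePS : ℤ → V := fun m => if m = 0 then 1 else 0

/-- `L` has degree `N` (as a pseudodifferential operator). -/
def hasDeg (c : ℤ → V) (N : ℤ) : Prop := c N ≠ 0 ∧ ∀ m : ℤ, N < m → c m = 0

/-- Embedding of a differential operator (coefficients indexed by `ℕ`) as a
pseudodifferential operator. -/
def loc (a : ℕ → V) : ℤ → V := fun m => if 0 ≤ m then a m.toNat else 0

end DiffAlg

namespace DiffAlg

variable {V : Type} [CommRing V] [Algebra ℂ V]

/-- Application of the differential operator with coefficients `a` to an element. -/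
noncomputable def opApp (A : DiffAlg V) (a : ℕ → V) (f : V) : V :=
  ∑ᶠ k, a k * (fun x => A.total x)^[k] f

/-- The coefficients of the differential operator `(D_A)_F = Σ_k F⁽ᵏ⁾ D_{a_k}`. -/
noncomputable def dafC (A : DiffAlg V) (a : ℕ → V) (F : V) : ℕ → V := fun j =>
  ∑ᶠ k, (fun x => A.total x)^[k] F * A.pd j (a k)

/-- `A` (with coefficients `a`) is hereditary:
`X_{A(F)}(A) - [(D_A)_F, A] = A ∘ (X_F(A))` for all `F`, as pseudodifferential
operators (coefficientwise). -/
noncomputable def IsHereditary (A : DiffAlg V) (a : ℕ → V) : Prop :=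
  ∀ F : V, ∀ m : ℤ,
    loc (fun j => evf A (opApp A a F) (a j)) m
      - (mulZ A (loc (dafC A a F)) (loc a) m - mulZ A (loc a) (loc (dafC A a F)) m)
    = mulZ A (loc a) (loc (fun j => evf A F (a j))) m

end DiffAlg

/-!
Write `D_P g = X_g(P)` for the Fréchet derivative. Applied to functions, "`A` is recursion
for `P`" reads `D_P (A g) = X_P(A) g + A (D_P g)`; the coefficient identities of the
hypotheses become such operator identities because `mulZ` of two differential operators is
their composition. Hereditarity, combined with the chain rule `D_{A P} = (D_A)_P + A ∘ D_P`,
shows that recursion passes from `P` to `A P`, hence to every `Aⁿ F`. For such `P` one has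
`{P, A Q} = A {P, Q}`, so `{Aᵖ F, Aᵖ⁺ᵈ F} = Aᵈ {Aᵖ F, Aᵖ F} = 0`.
-/

open Finset Function Filter

theorem Derivation.pow_apply_mul {R S : Type*} [CommSemiring R] [CommSemiring S] [Algebra R S]
    (D : Derivation R S S) (n : ℕ) (a b : S) :
    ((D : S →ₗ[R] S) ^ n) (a * b) = ∑ ij ∈ antidiagonal n,
      n.choose ij.1 • (((D : S →ₗ[R] S) ^ ij.1) a * ((D : S →ₗ[R] S) ^ ij.2) b) := by
  induction n with
  | zero => simp
  | succ n ih =>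
    rw [sum_antidiagonal_choose_succ_nsmul
      (fun i j => ((D : S →ₗ[R] S) ^ i) a * ((D : S →ₗ[R] S) ^ j) b) n]
    simp only [pow_succ', Module.End.mul_apply, ih, map_sum, map_nsmul, Derivation.coeFn_coe,
      Derivation.leibniz, smul_eq_mul, nsmul_add, sum_add_distrib]
    congr 1
    refine sum_congr rfl fun ij hij => ?_
    rw [Nat.choose_symm_of_eq_add (mem_antidiagonal.1 hij).symm]
    ring

lemma Function.HasFiniteSupport.eventually_atTop_eq_zero {M : Type*} [Zero M] {c : ℕ → M}
    (h : HasFiniteSupport c) : ∀ᶠ n in atTop, c n = 0 := by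
  rw [← Nat.cofinite_eq_atTop]
  exact h.eventually_cofinite_notMem.mono fun _ => notMem_support.1

lemma finsum_eq_sum_range {M : Type*} [AddCommMonoid M] {f : ℕ → M} {N : ℕ}
    (h : ∀ n, N ≤ n → f n = 0) : ∑ᶠ n, f n = ∑ n ∈ range N, f n :=
  finsum_eq_finsetSum_of_support_subset f fun n hn =>
    mem_range.2 (not_le.1 fun hN => hn (h n hN))

lemma intChoose_natCast (k n : ℕ) : intChoose k n = k.choose n := by
  unfold intChoose
  rcases le_or_gt n k with hnk | hkn
  · have hprod : ∏ i ∈ range n, ((k : ℤ) - i) = k.descFactorial n := by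
      rw [Nat.descFactorial_eq_prod_range, Nat.cast_prod]
      exact prod_congr rfl fun i hi => by rw [Nat.cast_sub (by simp at hi; omega)]
    rw [hprod, Nat.descFactorial_eq_factorial_mul_choose, Nat.cast_mul]
    exact Int.mul_ediv_cancel_left _ (by exact_mod_cast n.factorial_ne_zero)
  · rw [prod_eq_zero (mem_range.2 hkn) (sub_self _), Int.zero_ediv,
      Nat.choose_eq_zero_of_lt hkn, Nat.cast_zero]

namespace DiffAlg

section

variable {V : Type} [CommRing V]

lemma loc_natCast (a : ℕ → V) (j : ℕ) : loc a j = a j := by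
  simp [loc]

lemma loc_of_neg (a : ℕ → V) {m : ℤ} (h : m < 0) : loc a m = 0 := by
  simp [loc, not_le.2 h]

lemma sum_range_loc_sub {M : Type*} [AddCommMonoid M] {q : ℕ → V} {N d L : ℕ}
    (hq : ∀ l, N ≤ l → q l = 0) (hL : d + N ≤ L) (F : V → ℕ → M) (hF : ∀ j, F 0 j = 0) :
    ∑ j ∈ range L, F (loc q (j - d)) j = ∑ l ∈ range N, F (q l) (l + d) := by
  obtain ⟨L, rfl⟩ := Nat.exists_eq_add_of_le (le_of_add_le_left hL)
  rw [sum_range_add, sum_eq_zero fun j hj => by rw [loc_of_neg q (by simp at hj; omega), hF],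
    zero_add]
  simp only [Nat.cast_add, add_sub_cancel_left, loc_natCast]
  rw [← finsum_eq_sum_range fun l hl => by rw [hq l (by omega), hF],
    finsum_eq_sum_range fun l hl => by rw [hq l hl, hF]]
  exact sum_congr rfl fun l _ => by rw [add_comm]

end

variable {V : Type} [CommRing V] [Algebra ℂ V] (A : DiffAlg V)

noncomputable def totalPow (k : ℕ) : Module.End ℂ V := (A.total : V →ₗ[ℂ] V) ^ k

lemma iterate_total_apply (k : ℕ) (f : V) :
    (fun x => A.total x)^[k] f = A.totalPow k f :=
  (Module.End.pow_apply _ k f).symm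

lemma totalPow_succ_apply (k : ℕ) (f : V) :
    A.totalPow (k + 1) f = A.total (A.totalPow k f) := by
  rw [totalPow, pow_succ', Module.End.mul_apply]; rfl

lemma totalPow_add_apply (i j : ℕ) (f : V) :
    A.totalPow (i + j) f = A.totalPow i (A.totalPow j f) := by
  rw [totalPow, pow_add, Module.End.mul_apply]; rfl

lemma totalPow_mul (k : ℕ) (f g : V) :
    A.totalPow k (f * g) =
      ∑ ij ∈ antidiagonal k, k.choose ij.1 • (A.totalPow ij.1 f * A.totalPow ij.2 g) :=
  A.total.pow_apply_mul k f g

lemma hasFiniteSupport_mul_pd (c : ℕ → V) (f : V) : HasFiniteSupport fun n => c n * A.pd n f :=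
  HasFiniteSupport.fun_mul_right c (A.pdFin f)

lemma total_mul (f g : V) : A.total (f * g) = A.total f * g + f * A.total g := by
  rw [Derivation.leibniz, smul_eq_mul, smul_eq_mul, add_comm, mul_comm g]

lemma pd_total (j : ℕ) (f : V) :
    A.pd j (A.total f) = A.total (A.pd j f) + ∑ᶠ n, A.pd j (A.u (n + 1)) * A.pd n f := by
  have hleib : ∀ n, A.pd j (A.u (n + 1) * A.pd n f) =
      A.u (n + 1) * A.pd n (A.pd j f) + A.pd j (A.u (n + 1)) * A.pd n f := fun n => by
    rw [Derivation.leibniz, A.pd_comm, smul_eq_mul, smul_eq_mul, mul_comm (A.pd n f)]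
  rw [A.total_eq, A.total_eq, map_add, map_finsum _ (A.hasFiniteSupport_mul_pd _ f),
    finsum_congr hleib, finsum_add_distrib (A.hasFiniteSupport_mul_pd _ _)
      (A.hasFiniteSupport_mul_pd _ f), A.pd_dx]
  abel

lemma pd_zero_total (f : V) : A.pd 0 (A.total f) = A.total (A.pd 0 f) := by
  simp [pd_total, A.pd_u]

lemma pd_succ_total (j : ℕ) (f : V) :
    A.pd (j + 1) (A.total f) = A.total (A.pd (j + 1) f) + A.pd j f := by
  rw [pd_total, finsum_eq_single _ j fun n hn => by simp [A.pd_u, hn.symm]]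
  simp [A.pd_u]

lemma evf_eq (P f : V) : evf A P f = ∑ᶠ n, A.totalPow n P * A.pd n f := by
  simp only [evf, iterate_total_apply]

noncomputable def evfDerivation (P : V) : Derivation ℂ V V :=
  Derivation.mk'
    { toFun := evf A P
      map_add' := fun f g => by
        simp only [evf_eq, map_add, mul_add]
        exact finsum_add_distrib (A.hasFiniteSupport_mul_pd _ f) (A.hasFiniteSupport_mul_pd _ g)
      map_smul' := fun c f => by
        simp only [evf_eq, Derivation.map_smul, mul_smul_comm, RingHom.id_apply]
        exact (smul_finsum' c (A.hasFiniteSupport_mul_pd _ f)).symm }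
    fun f g => by
      have hg := A.hasFiniteSupport_mul_pd (A.totalPow · P) g
      have hf := A.hasFiniteSupport_mul_pd (A.totalPow · P) f
      simp only [LinearMap.coe_mk, AddHom.coe_mk, evf_eq, smul_eq_mul, mul_finsum' _ _ hg,
        mul_finsum' _ _ hf, ← finsum_add_distrib (hg.fun_mul_right _) (hf.fun_mul_right _)]
      exact finsum_congr fun n => by rw [Derivation.leibniz, smul_eq_mul, smul_eq_mul]; ring

@[simp]
lemma evfDerivation_apply (P f : V) : A.evfDerivation P f = evf A P f := rfl

lemma evf_total (P f : V) : evf A P (A.total f) = A.total (evf A P f) := by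
  obtain ⟨N, hN⟩ := eventually_atTop.1 (HasFiniteSupport.eventually_atTop_eq_zero (A.pdFin f))
  have hN' : ∀ n, N + 1 ≤ n → A.pd n (A.total f) = 0 := fun n hn => by
    obtain ⟨n, rfl⟩ : ∃ m, n = m + 1 := ⟨n - 1, by omega⟩
    rw [pd_succ_total, hN _ (by omega), hN _ (by omega), map_zero, add_zero]
  rw [evf_eq, evf_eq, finsum_eq_sum_range (N := N + 1) fun n hn => by rw [hN' n hn, mul_zero],
    finsum_eq_sum_range (N := N + 1) fun n hn => by rw [hN n (by omega), mul_zero], map_sum]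
  simp only [total_mul, ← totalPow_succ_apply, sum_add_distrib]
  -- `pd_succ_total` produces exactly the terms `∂ⁿ⁺¹P * pd n f` that `∂` puts on `∂ⁿP`.
  rw [sum_range_succ', sum_range_succ' (fun n => A.totalPow n P * A.total _),
    sum_range_succ (fun n => A.totalPow (n + 1) P * _), hN N le_rfl]
  simp only [pd_succ_total, pd_zero_total, mul_add, sum_add_distrib]
  ring

lemma totalPow_evf (k : ℕ) (P f : V) :
    A.totalPow k (evf A P f) = evf A P (A.totalPow k f) := by
  induction k with
  | zero => rfl
  | succ k ih => rw [totalPow_succ_apply, totalPow_succ_apply, ih, evf_total]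

lemma evf_mul (P f g : V) : evf A P (f * g) = evf A P f * g + f * evf A P g := by
  rw [← evfDerivation_apply, Derivation.leibniz, smul_eq_mul, smul_eq_mul, add_comm, mul_comm g]
  rfl

lemma evf_zero (P : V) : evf A P 0 = 0 := (A.evfDerivation P).map_zero

lemma eventually_pd_eq_zero {a : ℕ → V} (ha : HasFiniteSupport a) :
    ∀ᶠ n in atTop, ∀ k, A.pd n (a k) = 0 := by
  rw [← Nat.cofinite_eq_atTop]
  refine (ha.biUnion fun k _ => A.pdFin (a k)).eventually_cofinite_notMem.mono fun n hn k => ?_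
  by_cases hk : a k = 0
  · rw [hk, map_zero]
  · by_contra h
    exact hn (Set.mem_biUnion hk h)

lemma opApp_eq (c : ℕ → V) (g : V) : opApp A c g = ∑ᶠ k, c k * A.totalPow k g := by
  simp only [opApp, iterate_total_apply]

lemma opApp_eq_sum_range {c : ℕ → V} {N : ℕ} (hc : ∀ k, N ≤ k → c k = 0) (g : V) :
    opApp A c g = ∑ k ∈ range N, c k * A.totalPow k g := by
  rw [opApp_eq, finsum_eq_sum_range fun k hk => by rw [hc k hk, zero_mul]]

lemma opApp_zero (c : ℕ → V) : opApp A c 0 = 0 := by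
  simp [opApp_eq]

lemma opApp_add {c : ℕ → V} (hc : HasFiniteSupport c) (f g : V) :
    opApp A c (f + g) = opApp A c f + opApp A c g := by
  simp only [opApp_eq, map_add, mul_add]
  exact finsum_add_distrib (hc.fun_mul_left _) (hc.fun_mul_left _)

lemma opApp_sub {c : ℕ → V} (hc : HasFiniteSupport c) (f g : V) :
    opApp A c (f - g) = opApp A c f - opApp A c g := by
  simp only [opApp_eq, map_sub, mul_sub]
  exact finsum_sub_distrib (hc.fun_mul_left _) (hc.fun_mul_left _)

lemma add_opApp {c d : ℕ → V} (hc : HasFiniteSupport c) (hd : HasFiniteSupport d) (g : V) :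
    opApp A (c + d) g = opApp A c g + opApp A d g := by
  simp only [opApp_eq, Pi.add_apply, add_mul]
  exact finsum_add_distrib (hc.fun_mul_left _) (hd.fun_mul_left _)

lemma sub_opApp {c d : ℕ → V} (hc : HasFiniteSupport c) (hd : HasFiniteSupport d) (g : V) :
    opApp A (c - d) g = opApp A c g - opApp A d g := by
  simp only [opApp_eq, Pi.sub_apply, sub_mul]
  exact finsum_sub_distrib (hc.fun_mul_left _) (hd.fun_mul_left _)

lemma evf_eq_opApp (P f : V) : evf A P f = opApp A (fun n => A.pd n f) P := by
  rw [evf_eq, opApp_eq]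
  exact finsum_congr fun n => mul_comm _ _

lemma evf_opApp {a : ℕ → V} (ha : HasFiniteSupport a) (P f : V) :
    evf A P (opApp A a f) = opApp A (fun j => evf A P (a j)) f + opApp A a (evf A P f) := by
  obtain ⟨N, hN⟩ := eventually_atTop.1 ha.eventually_atTop_eq_zero
  rw [opApp_eq_sum_range A hN, opApp_eq_sum_range A hN,
    opApp_eq_sum_range A fun k hk => by rw [hN k hk, evf_zero], ← evfDerivation_apply, map_sum]
  simp only [evfDerivation_apply, evf_mul, totalPow_evf, sum_add_distrib]

lemma hasFiniteSupport_dafC {a : ℕ → V} (ha : HasFiniteSupport a) (Q : V) :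
    HasFiniteSupport (dafC A a Q) := by
  obtain ⟨N, hN⟩ := eventually_atTop.1 (A.eventually_pd_eq_zero ha)
  refine (Set.finite_Iio N).subset fun n hn => Set.mem_Iio.2 (not_le.1 fun h => hn ?_)
  simp [dafC, hN n h]

lemma opApp_evf_eq_opApp_dafC {a : ℕ → V} (ha : HasFiniteSupport a) (g Q : V) :
    opApp A (fun j => evf A g (a j)) Q = opApp A (dafC A a Q) g := by
  obtain ⟨N, hN⟩ := eventually_atTop.1
    (ha.eventually_atTop_eq_zero.and (A.eventually_pd_eq_zero ha))
  have hdafC : ∀ n, dafC A a Q n = ∑ k ∈ range N, A.totalPow k Q * A.pd n (a k) := fun n => by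
    simp only [dafC, iterate_total_apply]
    exact finsum_eq_sum_range fun k hk => by rw [(hN k hk).1, map_zero, mul_zero]
  have hevf : ∀ j, evf A g (a j) = ∑ n ∈ range N, A.totalPow n g * A.pd n (a j) := fun j => by
    rw [evf_eq]
    exact finsum_eq_sum_range fun n hn => by rw [(hN n hn).2, mul_zero]
  rw [opApp_eq_sum_range A fun k hk => by rw [(hN k hk).1, evf_zero],
    opApp_eq_sum_range A fun n hn => by simp [hdafC, (hN n hn).2]]
  simp only [hdafC, hevf, sum_mul]
  rw [sum_comm]
  exact sum_congr rfl fun n _ => sum_congr rfl fun k _ => by ring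

-- The chain rule `D_{A(Q)} = (D_A)_Q + A ∘ D_Q`.
lemma evf_opApp_eq_dafC {a : ℕ → V} (ha : HasFiniteSupport a) (g Q : V) :
    evf A g (opApp A a Q) = opApp A (dafC A a Q) g + opApp A a (evf A g Q) := by
  rw [evf_opApp A ha, opApp_evf_eq_opApp_dafC A ha]

lemma mulZ_loc_left {p : ℕ → V} {N : ℕ} (hp : ∀ k, N ≤ k → p k = 0) (b : ℤ → V) (j : ℤ) :
    mulZ A (loc p) b j = ∑ k ∈ range N, ∑ x ∈ antidiagonal k,
      k.choose x.1 • (p k * A.totalPow x.1 (b (j - x.2))) := by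
  unfold mulZ
  simp only [iterate_total_apply]
  rw [finsum_eq_finsetSum_of_support_subset _ (s := (range N).map Nat.castEmbedding) ?_, sum_map]
  · refine sum_congr rfl fun k _ => ?_
    rw [Nat.castEmbedding_apply, Nat.sum_antidiagonal_eq_sum_range_succ_mk,
      finsum_eq_sum_range (N := k + 1) fun n hn => by
      rw [intChoose_natCast, Nat.choose_eq_zero_of_lt (by omega), Nat.cast_zero, zero_smul]]
    refine sum_congr rfl fun n hn => ?_
    have hjn : j - k + n = j - (k - n : ℕ) := by
      rw [Nat.cast_sub (by simp at hn; omega)]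
      ring
    rw [intChoose_natCast, natCast_zsmul, loc_natCast, hjn]
  · intro k hk
    have hpk : loc p k ≠ 0 := fun h0 => hk (finsum_eq_zero_of_forall_eq_zero fun n => by
      rw [h0, zero_mul, smul_zero])
    have hk0 : 0 ≤ k := not_lt.1 fun h => hpk (loc_of_neg p h)
    have hkN : k.toNat < N := not_le.1 fun h => hpk (by simp [loc, hk0, hp _ h])
    simp only [coe_map, coe_range, Set.mem_image, Set.mem_Iio, Nat.castEmbedding_apply]
    exact ⟨k.toNat, hkN, Int.toNat_of_nonneg hk0⟩

lemma mulZ_loc_loc_eq_zero {p q : ℕ → V} {N : ℕ} (hp : ∀ k, N ≤ k → p k = 0)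
    (hq : ∀ k, N ≤ k → q k = 0) {j : ℕ} (hj : 2 * N ≤ j) : mulZ A (loc p) (loc q) j = 0 := by
  rw [mulZ_loc_left A hp]
  refine sum_eq_zero fun k hk => sum_eq_zero fun x hx => ?_
  have hkx := mem_antidiagonal.1 hx
  have hkN := mem_range.1 hk
  rw [show (j : ℤ) - x.2 = (j - x.2 : ℕ) by omega, loc_natCast, hq _ (by omega), map_zero,
    mul_zero, smul_zero]

lemma hasFiniteSupport_mulZ_loc_loc {p q : ℕ → V} (hp : HasFiniteSupport p)
    (hq : HasFiniteSupport q) : HasFiniteSupport fun j : ℕ => mulZ A (loc p) (loc q) j := by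
  obtain ⟨N, hN⟩ := eventually_atTop.1 (hp.eventually_atTop_eq_zero.and hq.eventually_atTop_eq_zero)
  refine (Set.finite_Iio (2 * N)).subset fun j hj => Set.mem_Iio.2 (not_le.1 fun h => hj ?_)
  exact A.mulZ_loc_loc_eq_zero (fun k hk => (hN k hk).1) (fun k hk => (hN k hk).2) h

lemma opApp_mulZ_loc_loc {p q : ℕ → V} (hp : HasFiniteSupport p) (hq : HasFiniteSupport q)
    (g : V) : opApp A (fun j => mulZ A (loc p) (loc q) j) g = opApp A p (opApp A q g) := by
  obtain ⟨N, hN⟩ := eventually_atTop.1 (hp.eventually_atTop_eq_zero.and hq.eventually_atTop_eq_zero)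
  have hpN : ∀ k, N ≤ k → p k = 0 := fun k hk => (hN k hk).1
  have hqN : ∀ k, N ≤ k → q k = 0 := fun k hk => (hN k hk).2
  rw [opApp_eq_sum_range A fun j => A.mulZ_loc_loc_eq_zero hpN hqN, opApp_eq_sum_range A hpN,
    opApp_eq_sum_range A hqN]
  -- Both sides become `∑ k, ∑ i + d = k, ∑ l, C(k, i) pₖ ∂ⁱ(q l) ∂ˡ⁺ᵈ g`; on the left,
  -- `l = j - d`.
  simp only [mulZ_loc_left A hpN, sum_mul, map_sum, totalPow_mul, mul_sum]
  rw [sum_comm]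
  refine sum_congr rfl fun k hk => ?_
  rw [sum_comm, sum_comm (s := range N)]
  refine sum_congr rfl fun x hx => ?_
  rw [sum_range_loc_sub hqN (by have := mem_antidiagonal.1 hx; simp at hk; omega)
    (fun v j => k.choose x.1 • (p k * A.totalPow x.1 v) * A.totalPow j g) (by simp)]
  refine sum_congr rfl fun l _ => ?_
  rw [add_comm, totalPow_add_apply, nsmul_eq_mul, nsmul_eq_mul]
  ring

-- The applied form of `𝓛_P(A) = 0`: `D_P ∘ A = X_P(A) + A ∘ D_P`, with `D_P g = X_g(P)`.
def IsRecursion (a : ℕ → V) (P : V) : Prop :=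
  ∀ g, evf A (opApp A a g) P = opApp A (fun j => evf A P (a j)) g + opApp A a (evf A g P)

lemma isRecursion_of_coeff {a : ℕ → V} (ha : HasFiniteSupport a) {P : V}
    (h : ∀ m : ℤ, loc (fun j => evf A P (a j)) m
      = mulZ A (DFz A P) (loc a) m - mulZ A (loc a) (DFz A P) m) :
    IsRecursion A a P := by
  intro g
  have hP : HasFiniteSupport fun n => A.pd n P := A.pdFin P
  have hcoeff : (fun j => evf A P (a j)) = (fun j : ℕ => mulZ A (loc (A.pd · P)) (loc a) j)
      - fun j : ℕ => mulZ A (loc a) (loc (A.pd · P)) j :=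
    funext fun j => by
      rw [Pi.sub_apply, ← loc_natCast (fun j => evf A P (a j)) j]
      exact h j
  rw [hcoeff, sub_opApp A (A.hasFiniteSupport_mulZ_loc_loc hP ha)
    (A.hasFiniteSupport_mulZ_loc_loc ha hP), opApp_mulZ_loc_loc A hP ha,
    opApp_mulZ_loc_loc A ha hP, evf_eq_opApp, evf_eq_opApp]
  abel

lemma opApp_evf_coeff_of_isHereditary {a : ℕ → V} (ha : HasFiniteSupport a)
    (her : IsHereditary A a) (P g : V) :
    opApp A (fun j => evf A (opApp A a P) (a j)) g =
      opApp A (dafC A a P) (opApp A a g) - opApp A a (opApp A (dafC A a P) g)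
        + opApp A a (opApp A (fun j => evf A P (a j)) g) := by
  have hD := A.hasFiniteSupport_dafC ha P
  have hX : HasFiniteSupport fun j => evf A P (a j) := ha.fun_comp (A.evf_zero P)
  have hcoeff : (fun j => evf A (opApp A a P) (a j)) =
      ((fun j : ℕ => mulZ A (loc (dafC A a P)) (loc a) j)
        - (fun j : ℕ => mulZ A (loc a) (loc (dafC A a P)) j))
        + fun j : ℕ => mulZ A (loc a) (loc fun j => evf A P (a j)) j :=
    funext fun j => by
      rw [Pi.add_apply, Pi.sub_apply, ← loc_natCast (fun j => evf A (opApp A a P) (a j)) j]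
      exact sub_eq_iff_eq_add'.1 (her P j)
  rw [hcoeff, add_opApp A ((A.hasFiniteSupport_mulZ_loc_loc hD ha).sub
      (A.hasFiniteSupport_mulZ_loc_loc ha hD)) (A.hasFiniteSupport_mulZ_loc_loc ha hX),
    sub_opApp A (A.hasFiniteSupport_mulZ_loc_loc hD ha) (A.hasFiniteSupport_mulZ_loc_loc ha hD),
    opApp_mulZ_loc_loc A hD ha, opApp_mulZ_loc_loc A ha hD, opApp_mulZ_loc_loc A ha hX]

lemma isRecursion_opApp {a : ℕ → V} (ha : HasFiniteSupport a) (her : IsHereditary A a) {P : V}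
    (hP : IsRecursion A a P) : IsRecursion A a (opApp A a P) := by
  intro g
  rw [opApp_evf_coeff_of_isHereditary A ha her, evf_opApp_eq_dafC A ha, evf_opApp_eq_dafC A ha,
    hP g, opApp_add A ha, opApp_add A ha]
  abel

lemma isRecursion_iterate {a : ℕ → V} (ha : HasFiniteSupport a) (her : IsHereditary A a)
    {F : V} (hF : IsRecursion A a F) (k : ℕ) : IsRecursion A a ((opApp A a)^[k] F) := by
  induction k with
  | zero => exact hF
  | succ k ih => simpa only [iterate_succ_apply'] using A.isRecursion_opApp ha her ih

noncomputable def bracket (F G : V) : V := evf A F G - evf A G F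

lemma IsRecursion.bracket_opApp {a : ℕ → V} (ha : HasFiniteSupport a) {P : V}
    (hP : IsRecursion A a P) (Q : V) :
    bracket A P (opApp A a Q) = opApp A a (bracket A P Q) := by
  rw [bracket, bracket, evf_opApp A ha, hP Q, opApp_sub A ha]
  abel

lemma bracket_iterate_add_eq_zero {a : ℕ → V} (ha : HasFiniteSupport a) {F : V}
    (hF : ∀ k, IsRecursion A a ((opApp A a)^[k] F)) (p d : ℕ) :
    bracket A ((opApp A a)^[p] F) ((opApp A a)^[p + d] F) = 0 := by
  induction d with
  | zero => exact sub_self _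
  | succ d ih =>
    rw [← add_assoc, iterate_succ_apply', (hF p).bracket_opApp A ha, ih, A.opApp_zero]

end DiffAlg

/-- let `A` be a hereditary differential operator on `V` and `F ∈ V` such
that `A` is recursion for `F` (`X_F(A) = [D_F, A]`). Then the functions `A^n(F)`
pairwise commute: `{A^n(F), A^m(F)} = 0` for all `n, m ≥ 0`. -/
theorem hereditary_recursion_commute {V : Type} [CommRing V] [Algebra ℂ V]
    (A : DiffAlg V) (a : ℕ → V) (ha : Set.Finite (Function.support a))
    (her : DiffAlg.IsHereditary A a) (F : V)
    (hrec : ∀ m : ℤ, DiffAlg.loc (fun j => DiffAlg.evf A F (a j)) m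
      = DiffAlg.mulZ A (DiffAlg.DFz A F) (DiffAlg.loc a) m
        - DiffAlg.mulZ A (DiffAlg.loc a) (DiffAlg.DFz A F) m) :
    ∀ n m : ℕ,
      DiffAlg.evf A ((DiffAlg.opApp A a)^[n] F) ((DiffAlg.opApp A a)^[m] F)
        = DiffAlg.evf A ((DiffAlg.opApp A a)^[m] F) ((DiffAlg.opApp A a)^[n] F) := by
  have hF := A.isRecursion_iterate ha her (A.isRecursion_of_coeff ha hrec)
  intro n m
  rcases le_total n m with h | h
  · obtain ⟨d, rfl⟩ := Nat.exists_eq_add_of_le h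
    exact sub_eq_zero.1 (A.bracket_iterate_add_eq_zero ha hF n d)
  · obtain ⟨d, rfl⟩ := Nat.exists_eq_add_of_le h
    exact (sub_eq_zero.1 (A.bracket_iterate_add_eq_zero ha hF m d)).symm
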